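/- arXiv:2011.11258 — 2 statements merged into one kernel-verified Lean document; each statement's English description precedes it below -/
import Mathlib

section
/- The function g_λ(x) = ∑_{l ∈ ℤ^m} cos(2π l·x)/(1 + λ‖l‖_{2k}^{2k}) is the unique solution in C^0(𝕋^m) ∩ H^k(𝕋^m) of the weak equation −φ(0) + λ∫_{𝕋^m} ∇^k φ · ∇^k g + ∫_{𝕋^m} φ g = 0 for all smooth test functions φ on 𝕋^m. -/
/-!
Testing the weak equation against the real trigonometric polynomials supported on `{l, -l}`
(that is, `d = z δ_l + z̄ δ_{-l}`) shows that it holds iff `(1 + λ‖l‖_{2k}^{2k}) ĝ_l = 1` for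
every `l`, which gives both existence and uniqueness. The only analytic input is that `g_λ` lies
in `H^k`: since `‖l‖_∞^{2k} ≤ ‖l‖_{2k}^{2k}`, the weight `(1 + ‖l‖_{2k}^{2k}) |ĝ_l|²` is
`O(‖l‖_∞^{-2k})`, which is summable over `ℤ^m` because `2k > m`.
-/

/-- The weight `‖l‖_{2k}^{2k} = ∑_{j=1}^m l_j^{2k}` appearing as the Fourier
multiplier of the `k`-gradient pairing `∫ ∇^k φ · ∇^k g` (with the paper's
normalization of `∇^k` on `𝕋^m`). -/
noncomputable def pw (m k : ℕ) (l : Fin m → ℤ) : ℝ := ∑ j, ((l j : ℝ)) ^ (2 * k)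

/-- Membership in `C^0(𝕋^m) ∩ H^k(𝕋^m)` for a conjugate-symmetric (real-valued)
Fourier coefficient sequence. -/
def AdmP (m k : ℕ) (c : (Fin m → ℤ) → ℂ) : Prop :=
  (∀ l, c (-l) = (starRingEnd ℂ) (c l)) ∧
  Summable (fun l : Fin m → ℤ => (1 + pw m k l) * ‖c l‖ ^ 2)

/-- The weak Euler–Lagrange equation
`−φ(0) + λ ∫_{𝕋^m} ∇^k φ · ∇^k g + ∫_{𝕋^m} φ g = 0` for all smooth test
functions `φ` on `𝕋^m`, written via Parseval through Fourier coefficients: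
smooth real test functions correspond to finitely supported conjugate-symmetric
coefficient sequences `d`, `φ(0) = ∑_l d_l`, `∫ φ g = ∑_l d_l * conj(ĝ_l)` and
`∫ ∇^k φ · ∇^k g = ∑_l ‖l‖_{2k}^{2k} d_l * conj(ĝ_l)`. -/
def WeakEL (m k : ℕ) (lam : ℝ) (c : (Fin m → ℤ) → ℂ) : Prop :=
  ∀ d : (Fin m → ℤ) → ℂ, (Function.support d).Finite →
    (∀ l, d (-l) = (starRingEnd ℂ) (d l)) →
    -(∑' l : Fin m → ℤ, d l)
      + (lam : ℂ) * ∑' l : Fin m → ℤ, (pw m k l : ℂ) * (d l * (starRingEnd ℂ) (c l))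
      + ∑' l : Fin m → ℤ, d l * (starRingEnd ℂ) (c l) = 0

open Function

lemma pi_norm_pow_le_sum_norm_pow {ι : Type*} [Fintype ι] {E : Type*} [SeminormedAddGroup E]
    (x : ι → E) {n : ℕ} (hn : n ≠ 0) : ‖x‖ ^ n ≤ ∑ i, ‖x i‖ ^ n := by
  by_contra! hlt
  have hpos : 0 < ‖x‖ := by
    by_contra! h0
    rw [h0.antisymm (norm_nonneg x), zero_pow hn] at hlt
    exact hlt.not_ge (Finset.sum_nonneg fun i _ => by positivity)
  refine lt_irrefl ‖x‖ ((pi_norm_lt_iff hpos).2 fun i => ?_)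
  refine lt_of_pow_lt_pow_left₀ n hpos.le (lt_of_le_of_lt ?_ hlt)
  exact Finset.single_le_sum (f := fun j => ‖x j‖ ^ n) (fun j _ => by positivity)
    (Finset.mem_univ i)

lemma summable_norm_intCast_rpow {ι : Type*} [Fintype ι] {r : ℝ} (hr : r < -Fintype.card ι) :
    Summable fun l : ι → ℤ => ‖fun i => (l i : ℝ)‖ ^ r := by
  let b := (Pi.basisFun ℝ ι).restrictScalars ℤ
  have hL := ZLattice.summable_norm_rpow _ r (by rwa [Module.finrank_eq_card_basis b])
  rw [← b.equivFun.toEquiv.symm.summable_iff] at hL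
  refine hL.congr fun l => ?_
  have hcoe : ((b.equivFun.symm l : _) : ι → ℝ) = fun i => (l i : ℝ) := by
    classical
    ext i
    simp [b, Module.Basis.equivFun_symm_apply, Finset.sum_apply, Pi.basisFun_apply,
      Pi.single_apply]
  rw [Function.comp_apply, LinearEquiv.coe_toEquiv_symm, ← hcoe]
  rfl

lemma pw_nonneg (m k : ℕ) (l : Fin m → ℤ) : 0 ≤ pw m k l :=
  Finset.sum_nonneg fun _ _ => (even_two_mul k).pow_nonneg _

lemma pw_neg (m k : ℕ) (l : Fin m → ℤ) : pw m k (-l) = pw m k l := by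
  simp only [pw, Pi.neg_apply, Int.cast_neg, (even_two_mul k).neg_pow]

lemma norm_intCast_pow_le_pw {m k : ℕ} (hk : k ≠ 0) (l : Fin m → ℤ) :
    ‖fun j => (l j : ℝ)‖ ^ (2 * k) ≤ pw m k l := by
  simpa only [pw, Real.norm_eq_abs, (even_two_mul k).pow_abs] using
    pi_norm_pow_le_sum_norm_pow (fun j => (l j : ℝ)) (n := 2 * k) (by positivity)

lemma summable_one_add_pw_inv {m k : ℕ} (hkm : m < 2 * k) :
    Summable fun l : Fin m → ℤ => (1 + pw m k l)⁻¹ := by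
  have hk : k ≠ 0 := by rintro rfl; omega
  have hr : -((2 * k : ℕ) : ℝ) < -Fintype.card (Fin m) := by
    simp only [neg_lt_neg_iff, Fintype.card_fin]
    exact_mod_cast hkm
  refine (summable_norm_intCast_rpow hr).of_norm_bounded_eventually ?_
  filter_upwards [Filter.eventually_cofinite_ne 0] with l hl
  have hpos : 0 < ‖fun j => (l j : ℝ)‖ := by
    refine norm_pos_iff.2 fun h => hl (funext fun j => ?_)
    simpa using congrFun h j
  have hpw := pw_nonneg m k l
  rw [Real.rpow_neg hpos.le, Real.rpow_natCast, Real.norm_of_nonneg (by positivity)]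
  exact inv_anti₀ (by positivity)
    ((norm_intCast_pow_le_pw hk l).trans (le_add_of_nonneg_left zero_le_one))

lemma one_add_mul_inv_sq_le {p lam : ℝ} (hp : 0 ≤ p) (hlam : 0 < lam) :
    (1 + p) * ((1 + lam * p)⁻¹) ^ 2 ≤ (1 + lam⁻¹) ^ 2 * (1 + p)⁻¹ := by
  have key : 1 + p ≤ (1 + lam⁻¹) * (1 + lam * p) := by
    have : (1 + lam⁻¹) * (1 + lam * p) = 1 + p + (lam * p + lam⁻¹) := by
      field_simp; ring
    rw [this]; linarith [mul_nonneg hlam.le hp, inv_nonneg.2 hlam.le]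
  rw [inv_pow, ← div_eq_mul_inv, ← div_eq_mul_inv, div_le_div_iff₀ (by positivity) (by positivity),
    ← mul_pow, ← sq]
  exact pow_le_pow_left₀ (by positivity) key 2

lemma admP_inv_one_add_mul_pw {m k : ℕ} (hkm : m < 2 * k) {lam : ℝ} (hlam : 0 < lam) :
    AdmP m k (fun l => ((1 + lam * pw m k l : ℝ) : ℂ)⁻¹) := by
  refine ⟨fun l => by simp only [pw_neg, ← Complex.ofReal_inv, Complex.conj_ofReal], ?_⟩
  refine ((summable_one_add_pw_inv hkm).mul_left ((1 + lam⁻¹) ^ 2)).of_nonneg_of_le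
    (fun l => by have := pw_nonneg m k l; positivity) fun l => ?_
  have hpw := pw_nonneg m k l
  rw [norm_inv, Complex.norm_real, Real.norm_of_nonneg (by positivity)]
  exact one_add_mul_inv_sq_le hpw hlam

lemma weakEL_iff {m k : ℕ} {lam : ℝ} {c : (Fin m → ℤ) → ℂ} :
    WeakEL m k lam c ↔ ∀ d : (Fin m → ℤ) → ℂ, (support d).Finite →
      (∀ l, d (-l) = (starRingEnd ℂ) (d l)) →
      ∑' l, d l * (((1 + lam * pw m k l : ℝ) : ℂ) * (starRingEnd ℂ) (c l) - 1) = 0 := by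
  refine forall₃_congr fun d hd _ => ?_
  have hsupp : ∀ f : (Fin m → ℤ) → ℂ, support (fun l => d l * f l) ⊆ hd.toFinset := fun f => by
    simpa only [Set.Finite.coe_toFinset] using support_mul_subset_left d f
  rw [tsum_eq_sum' (s := hd.toFinset) (by simp), tsum_eq_sum' (hsupp _),
    tsum_eq_sum' ((support_mul_subset_right _ _).trans (hsupp _)), tsum_eq_sum' (hsupp _),
    Finset.mul_sum, ← Finset.sum_neg_distrib, ← Finset.sum_add_distrib, ← Finset.sum_add_distrib]
  refine Eq.congr_left (Finset.sum_congr rfl fun l _ => ?_)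
  push_cast
  ring

section SymmSingle

variable {α : Type*} [InvolutiveNeg α] [DecidableEq α]

/-- The coefficient sequence of the real trigonometric polynomial `z e^{2πi a·x} + c.c.`. -/
def symmSingle (a : α) (z : ℂ) : α → ℂ :=
  Pi.single a z + Pi.single (-a) ((starRingEnd ℂ) z)

lemma finite_support_symmSingle (a : α) (z : ℂ) : (support (symmSingle a z)).Finite :=
  ((Set.finite_singleton a).union (Set.finite_singleton (-a))).subset
    ((support_add _ _).trans
      (Set.union_subset_union Pi.support_single_subset Pi.support_single_subset))

lemma symmSingle_neg (a : α) (z : ℂ) (b : α) :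
    symmSingle a z (-b) = (starRingEnd ℂ) (symmSingle a z b) := by
  have hneg : ∀ (x : α) (w : ℂ), (Pi.single x w : α → ℂ) (-b) = (Pi.single (-x) w : α → ℂ) b := by
    simp only [Pi.single_apply, neg_eq_iff_eq_neg, implies_true]
  have hconj : ∀ (x : α) (w : ℂ), (starRingEnd ℂ) ((Pi.single x w : α → ℂ) b) =
      (Pi.single x ((starRingEnd ℂ) w) : α → ℂ) b :=
    fun x w => Pi.apply_single (fun _ => starRingEnd ℂ) (fun _ => map_zero _) x w b
  simp only [symmSingle, Pi.add_apply]
  rw [hneg, hneg, neg_neg, map_add, hconj, hconj, Complex.conj_conj, add_comm]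

lemma tsum_symmSingle_mul (a : α) (z : ℂ) (e : α → ℂ) :
    ∑' b, symmSingle a z b * e b = z * e a + (starRingEnd ℂ) z * e (-a) := by
  have hde : (fun b => symmSingle a z b * e b) = fun b =>
      Pi.single a (z * e a) b + Pi.single (-a) ((starRingEnd ℂ) z * e (-a)) b := by
    ext b
    simp only [symmSingle, Pi.single_mul_left, Pi.add_apply, Pi.mul_apply, add_mul]
  rw [hde, (HasSum.add (hasSum_pi_single a _) (hasSum_pi_single (-a) _)).tsum_eq]

end SymmSingle

lemma eq_zero_of_forall_tsum_mul_eq_zero {α : Type*} [InvolutiveNeg α] {e : α → ℂ}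
    (he : ∀ a, e (-a) = (starRingEnd ℂ) (e a))
    (h : ∀ d : α → ℂ, (support d).Finite → (∀ a, d (-a) = (starRingEnd ℂ) (d a)) →
      ∑' a, d a * e a = 0) :
    e = 0 := by
  classical
  have hre : ∀ a z, (z * e a).re = 0 := by
    intro a z
    have h2re : ((2 * (z * e a).re : ℝ) : ℂ) = 0 := by
      rw [← h _ (finite_support_symmSingle a z) (symmSingle_neg a z), tsum_symmSingle_mul, he,
        ← map_mul, Complex.add_conj]
    have : 2 * (z * e a).re = 0 := by exact_mod_cast h2re
    linarith
  funext a
  apply Complex.ext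
  · simpa using hre a 1
  · simpa using hre a Complex.I

lemma weakEL_inv_one_add_mul_pw {m k : ℕ} {lam : ℝ} (hlam : 0 ≤ lam) :
    WeakEL m k lam (fun l => ((1 + lam * pw m k l : ℝ) : ℂ)⁻¹) := by
  refine weakEL_iff.2 fun d _ _ => (tsum_congr fun l => ?_).trans tsum_zero
  have hpos : (0 : ℝ) < 1 + lam * pw m k l := by have := pw_nonneg m k l; positivity
  rw [← Complex.ofReal_inv, Complex.conj_ofReal, ← Complex.ofReal_mul, mul_inv_cancel₀ hpos.ne',
    Complex.ofReal_one, sub_self, mul_zero]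

lemma eq_inv_one_add_mul_pw_of_weakEL {m k : ℕ} {lam : ℝ} {c : (Fin m → ℤ) → ℂ}
    (hc : ∀ l, c (-l) = (starRingEnd ℂ) (c l)) (hw : WeakEL m k lam c) :
    c = fun l => ((1 + lam * pw m k l : ℝ) : ℂ)⁻¹ := by
  have hres := eq_zero_of_forall_tsum_mul_eq_zero
    (e := fun l => ((1 + lam * pw m k l : ℝ) : ℂ) * (starRingEnd ℂ) (c l) - 1)
    (fun l => by simp only [pw_neg, hc, Complex.conj_conj, map_sub, map_mul, Complex.conj_ofReal,
      map_one]) (weakEL_iff.1 hw)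
  funext l
  have hl := eq_inv_of_mul_eq_one_right (sub_eq_zero.1 (congrFun hres l))
  rw [← Complex.conj_conj (c l), hl, map_inv₀, Complex.conj_ofReal]

theorem stmt_6_general (m k : ℕ) (hkm : (m : ℝ) / 2 < (k : ℝ))
    (lam : ℝ) (hlam : 0 < lam) :
    AdmP m k (fun l => ((1 + lam * pw m k l : ℝ) : ℂ)⁻¹) ∧
    WeakEL m k lam (fun l => ((1 + lam * pw m k l : ℝ) : ℂ)⁻¹) ∧
    ∀ c : (Fin m → ℤ) → ℂ, AdmP m k c → WeakEL m k lam c →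
      c = fun l => ((1 + lam * pw m k l : ℝ) : ℂ)⁻¹ := by
  have hkm' : m < 2 * k := by exact_mod_cast (by linarith : (m : ℝ) < 2 * k)
  exact ⟨admP_inv_one_add_mul_pw hkm' hlam, weakEL_inv_one_add_mul_pw hlam.le,
    fun c hc hw => eq_inv_one_add_mul_pw_of_weakEL hc.1 hw⟩

/-- The function `g_λ(x) = ∑_{l ∈ ℤ^m} cos(2π l·x)/(1 + λ‖l‖_{2k}^{2k})`, i.e. the
coefficient sequence `ĝ_l = 1/(1 + λ‖l‖_{2k}^{2k})`, is the unique solution in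
`C^0(𝕋^m) ∩ H^k(𝕋^m)` of the weak equation
`−φ(0) + λ∫ ∇^k φ·∇^k g + ∫ φ g = 0` for all smooth test functions `φ`. -/
theorem stmt_6 (m k : ℕ) (hm : 0 < m) (hk : 0 < k) (hkm : (m : ℝ) / 2 < (k : ℝ))
    (lam : ℝ) (hlam : 0 < lam) :
    AdmP m k (fun l => ((1 + lam * pw m k l : ℝ) : ℂ)⁻¹) ∧
    WeakEL m k lam (fun l => ((1 + lam * pw m k l : ℝ) : ℂ)⁻¹) ∧
    ∀ c : (Fin m → ℤ) → ℂ, AdmP m k c → WeakEL m k lam c →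
      c = fun l => ((1 + lam * pw m k l : ℝ) : ℂ)⁻¹ :=
  stmt_6_general m k hkm lam hlam
end

section
/- For every λ > 0 and distinct points p_1,…,p_n ∈ 𝕋^m, the n×n matrix G_λ with entries (G_λ)_{ij} = g_λ(p_i − p_j), where g_λ(x) = ∑_{l ∈ ℤ^m} cos(2π l·x)/(1 + λ‖l‖_{2k}^{2k}) and k > m/2, is symmetric positive definite. -/
/-!
Writing `θ_l(p) = 2π l·p`, the quadratic form of `G_λ` is
`xᵀ G_λ x = ∑_l w(l) |∑_i x_i e^{iθ_l(p_i)}|²` with weights `w(l) = (1 + λ‖l‖_{2k}^{2k})⁻¹ > 0`,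
which are summable over `ℤ^m` because `2k > m`. Points that are distinct on the torus give
distinct characters `l ↦ e^{iθ_l(p_i)}` of `ℤ^m`, and distinct characters are linearly
independent (Dedekind), so for `x ≠ 0` some term of the series is strictly positive.
-/

/-- The kernel `g_λ(x) = ∑_{l ∈ ℤ^m} cos(2π l·x) / (1 + λ‖l‖_{2k}^{2k})`,
where `‖l‖_{2k}^{2k} = ∑_{j=1}^m l_j^{2k}`. -/
noncomputable def gfun (m k : ℕ) (lam : ℝ) (x : Fin m → ℝ) : ℝ :=
  ∑' l : Fin m → ℤ,
    Real.cos (2 * Real.pi * ∑ j, (l j : ℝ) * x j) / (1 + lam * ∑ j, ((l j : ℝ)) ^ (2 * k))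

open Real Finset Matrix

section Summability

variable {ι : Type*} [Fintype ι]

theorem summable_fintype_prod_of_nonneg {β : Type*} {g : ι → β → ℝ}
    (hg₀ : ∀ j b, 0 ≤ g j b) (hg : ∀ j, Summable (g j)) :
    Summable fun l : ι → β => ∏ j, g j (l j) := by
  classical
  refine summable_of_sum_le (c := ∏ j, ∑' b, g j b)
    (fun l => prod_nonneg fun j _ => hg₀ j _) fun s => ?_
  calc ∑ l ∈ s, ∏ j, g j (l j)
      ≤ ∑ l ∈ Fintype.piFinset fun j => s.image (· j), ∏ j, g j (l j) :=
        sum_le_sum_of_subset_of_nonneg (fun l hl => Fintype.mem_piFinset.2 fun j =>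
          mem_image_of_mem _ hl) fun l _ _ => prod_nonneg fun j _ => hg₀ j _
    _ = ∏ j, ∑ b ∈ s.image (· j), g j b := (prod_univ_sum _ _).symm
    _ ≤ ∏ j, ∑' b, g j b := prod_le_prod (fun j _ => sum_nonneg fun b _ => hg₀ j b)
        fun j _ => (hg j).sum_le_tsum _ fun b _ => hg₀ j b

theorem summable_one_add_int_pow_rpow_neg {k : ℕ} {s : ℝ} (h : 1 < 2 * k * s) :
    Summable fun n : ℤ => (1 + (n : ℝ) ^ (2 * k)) ^ (-s) := by
  have hs : 0 ≤ s := by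
    by_contra! hs
    nlinarith [(Nat.cast_nonneg k : (0 : ℝ) ≤ k)]
  refine (summable_abs_int_rpow h).of_norm_bounded_eventually ?_
  filter_upwards [Filter.eventually_cofinite_ne 0] with n hn
  have hpos : 0 < (n : ℝ) ^ (2 * k) := (even_two_mul k).pow_pos (Int.cast_ne_zero.2 hn)
  calc ‖(1 + (n : ℝ) ^ (2 * k)) ^ (-s)‖ = (1 + (n : ℝ) ^ (2 * k)) ^ (-s) :=
        norm_of_nonneg (by positivity)
    _ ≤ ((n : ℝ) ^ (2 * k)) ^ (-s) := rpow_le_rpow_of_nonpos hpos (by linarith) (by linarith)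
    _ = |(n : ℝ)| ^ (-(2 * k * s)) := by
        rw [← (even_two_mul k).pow_abs, ← rpow_natCast, ← rpow_mul (abs_nonneg _)]
        push_cast
        ring_nf

theorem inv_one_add_sum_le_prod_rpow [Nonempty ι] {x : ι → ℝ} (hx : ∀ j, 0 ≤ x j) :
    (1 + ∑ j, x j)⁻¹ ≤ ∏ j, (1 + x j) ^ (-(Fintype.card ι : ℝ)⁻¹) := by
  have hS : 0 ≤ ∑ j, x j := sum_nonneg fun j _ => hx j
  have hcard : (Fintype.card ι : ℝ) ≠ 0 := by positivity
  have hprod : ∏ j, (1 + x j) ≤ (1 + ∑ j, x j) ^ Fintype.card ι := by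
    rw [← card_univ, ← prod_const]
    exact prod_le_prod (fun j _ => by linarith [hx j]) fun j _ => by
      linarith [single_le_sum (fun i _ => hx i) (mem_univ j)]
  calc (1 + ∑ j, x j)⁻¹ = ((1 + ∑ j, x j) ^ Fintype.card ι) ^ (-(Fintype.card ι : ℝ)⁻¹) := by
        rw [← rpow_natCast, ← rpow_mul (by linarith), mul_neg, mul_inv_cancel₀ hcard,
          rpow_neg_one]
    _ ≤ (∏ j, (1 + x j)) ^ (-(Fintype.card ι : ℝ)⁻¹) :=
        rpow_le_rpow_of_nonpos (prod_pos fun j _ => by linarith [hx j]) hprod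
          (by simp only [Left.neg_nonpos_iff, inv_nonneg, Nat.cast_nonneg])
    _ = ∏ j, (1 + x j) ^ (-(Fintype.card ι : ℝ)⁻¹) :=
        (finsetProd_rpow _ _ (fun j _ => by linarith [hx j]) _).symm

/-- By `inv_one_add_sum_le_prod_rpow` the summand is dominated by a product of one-dimensional
series `∑_n (1 + n^{2k})^{-1/m}`, which converge because `2k/m > 1`. -/
theorem summable_inv_one_add_mul_sum_pow {k : ℕ} {c : ℝ} (hc : 0 < c)
    (hk : Fintype.card ι < 2 * k) :
    Summable fun l : ι → ℤ => (1 + c * ∑ j, (l j : ℝ) ^ (2 * k))⁻¹ := by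
  cases isEmpty_or_nonempty ι
  · exact .of_finite
  have hcard : (0 : ℝ) < Fintype.card ι := by exact_mod_cast Fintype.card_pos
  have hpow (x : ℝ) : 0 ≤ x ^ (2 * k) := (even_two_mul k).pow_nonneg x
  have hS (l : ι → ℤ) : 0 ≤ ∑ j, (l j : ℝ) ^ (2 * k) := sum_nonneg fun j _ => hpow _
  have hprod := summable_fintype_prod_of_nonneg (ι := ι)
    (g := fun _ (n : ℤ) => (1 + (n : ℝ) ^ (2 * k)) ^ (-(Fintype.card ι : ℝ)⁻¹))
    (fun _ n => rpow_nonneg (by linarith [hpow n]) _) fun _ =>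
      summable_one_add_int_pow_rpow_neg <| by
        rw [← div_eq_mul_inv, one_lt_div hcard]
        exact_mod_cast hk
  refine .of_nonneg_of_le (fun l => by have := hS l; positivity) (fun l => ?_)
    (hprod.mul_left (min 1 c)⁻¹)
  have hSl := hS l
  calc (1 + c * ∑ j, (l j : ℝ) ^ (2 * k))⁻¹ ≤ (min 1 c * (1 + ∑ j, (l j : ℝ) ^ (2 * k)))⁻¹ := by
        gcongr
        nlinarith [min_le_left 1 c, min_le_right 1 c]
    _ ≤ (min 1 c)⁻¹ * ∏ j, (1 + (l j : ℝ) ^ (2 * k)) ^ (-(Fintype.card ι : ℝ)⁻¹) := by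
        rw [mul_inv]
        gcongr
        exact inv_one_add_sum_le_prod_rpow fun j => hpow _

end Summability

theorem sum_sum_mul_mul_cos_sub_eq_normSq {ι : Type*} [Fintype ι] (x θ : ι → ℝ) :
    ∑ i, ∑ j, x i * x j * cos (θ i - θ j) =
      Complex.normSq (∑ i, (x i : ℂ) * Complex.exp (θ i * Complex.I)) := by
  simp only [Complex.normSq_apply, Complex.re_sum, Complex.im_sum, Complex.re_ofReal_mul,
    Complex.im_ofReal_mul, Complex.exp_ofReal_mul_I_re, Complex.exp_ofReal_mul_I_im,
    sum_mul_sum, ← sum_add_distrib, cos_sub]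
  exact sum_congr rfl fun i _ => sum_congr rfl fun j _ => by ring

theorem Matrix.posDef_of_tsum_mul_cos_sub {ι κ : Type*} [Fintype ι] {w : κ → ℝ}
    (hw : ∀ l, 0 < w l) (hsum : Summable w) {θ : κ → ι → ℝ}
    (hθ : LinearIndependent ℂ fun i l => Complex.exp (θ l i * Complex.I)) :
    (Matrix.of fun i j => ∑' l, w l * cos (θ l i - θ l j)).PosDef := by
  refine Matrix.posDef_iff_dotProduct_mulVec.2 ⟨?_, fun x hx => ?_⟩
  · ext i j
    simp only [conjTranspose_apply, of_apply, star_trivial, ← neg_sub (θ _ i), cos_neg]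
  have hcos_summable (i j : ι) : Summable fun l => w l * cos (θ l i - θ l j) :=
    hsum.of_norm_bounded fun l => by
      rw [norm_mul, norm_of_nonneg (hw l).le]
      exact mul_le_of_le_one_right (hw l).le (abs_cos_le_one _)
  set z : κ → ℂ := fun l => ∑ i, (x i : ℂ) * Complex.exp (θ l i * Complex.I)
  have hterm (l : κ) :
      ∑ i, ∑ j, x i * x j * (w l * cos (θ l i - θ l j)) = w l * Complex.normSq (z l) := by
    simp only [z, ← sum_sum_mul_mul_cos_sub_eq_normSq, mul_sum]
    exact sum_congr rfl fun i _ => sum_congr rfl fun j _ => by ring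
  have hsummable : Summable fun l => w l * Complex.normSq (z l) := by
    simp only [← hterm]
    exact summable_sum fun i _ => summable_sum fun j _ => (hcos_summable i j).mul_left _
  have hquad : star x ⬝ᵥ (Matrix.of fun i j => ∑' l, w l * cos (θ l i - θ l j)) *ᵥ x =
      ∑' l, w l * Complex.normSq (z l) := by
    simp only [← hterm]
    rw [Summable.tsum_finsetSum fun i _ => summable_sum fun j _ => (hcos_summable i j).mul_left _]
    simp only [dotProduct, mulVec, of_apply, star_trivial, mul_sum]
    refine sum_congr rfl fun i _ => ?_
    rw [Summable.tsum_finsetSum fun j _ => (hcos_summable i j).mul_left _]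
    exact sum_congr rfl fun j _ => by rw [tsum_mul_left]; ring
  obtain ⟨l, hl⟩ : ∃ l, z l ≠ 0 := by
    by_contra! h
    refine hx (funext fun i => Complex.ofReal_injective ?_)
    exact Fintype.linearIndependent_iff.1 hθ (fun i => x i)
      (funext fun l => by simpa [Finset.sum_apply] using h l) i
  rw [hquad]
  exact hsummable.tsum_pos (fun l => mul_nonneg (hw l).le (Complex.normSq_nonneg _)) l
    (mul_pos (hw l) (Complex.normSq_pos.2 hl))

theorem AddChar.linearIndependent_coe (A L : Type*) [AddMonoid A] [CommRing L] [IsDomain L] :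
    LinearIndependent L ((⇑) : AddChar A L → A → L) :=
  ((linearIndependent_monoidHom (Multiplicative A) L).comp _
    AddChar.toMonoidHomEquiv.injective).map' (LinearMap.funLeft L L Multiplicative.ofAdd)
    (LinearMap.ker_eq_bot.2 (LinearMap.funLeft_injective_of_surjective _ _ _
      Multiplicative.ofAdd.surjective))

noncomputable def torusChar {ι : Type*} [Fintype ι] (q : ι → ℝ) : AddChar (ι → ℤ) ℂ where
  toFun l := Complex.exp (↑(2 * π * ∑ j, (l j : ℝ) * q j) * Complex.I)
  map_zero_eq_one' := by simp
  map_add_eq_mul' a b := by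
    rw [← Complex.exp_add]
    simp only [Pi.add_apply, Int.cast_add, add_mul, sum_add_distrib]
    push_cast
    congr 1
    ring

theorem exists_int_sub_eq_of_torusChar_eq {ι : Type*} [Fintype ι] [DecidableEq ι]
    {q q' : ι → ℝ} (h : torusChar q = torusChar q') (t : ι) : ∃ z : ℤ, q t - q' t = z := by
  have ht := DFunLike.congr_fun h (Pi.single t 1)
  simp only [torusChar, AddChar.coe_mk, Pi.single_apply, Int.cast_ite, Int.cast_one,
    Int.cast_zero, ite_mul, one_mul, zero_mul, sum_ite_eq', mem_univ, if_true] at ht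
  obtain ⟨z, hz⟩ := Complex.exp_eq_exp_iff_exists_int.1 ht
  refine ⟨z, Complex.ofReal_injective ?_⟩
  have h2π : (2 * π * Complex.I : ℂ) ≠ 0 := by simp [pi_ne_zero]
  apply mul_right_cancel₀ h2π
  push_cast at hz ⊢
  linear_combination hz

theorem stmt_7_general (m k n : ℕ) (hkm : (m : ℝ) / 2 < (k : ℝ))
    (lam : ℝ) (hlam : 0 < lam) (p : Fin n → Fin m → ℝ)
    (hp : ∀ i j : Fin n, (∀ t, ∃ z : ℤ, p i t - p j t = (z : ℝ)) → i = j) :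
    (Matrix.of fun i j : Fin n => gfun m k lam (p i - p j)).PosDef := by
  set w : (Fin m → ℤ) → ℝ := fun l => (1 + lam * ∑ j, (l j : ℝ) ^ (2 * k))⁻¹
  have hw (l : Fin m → ℤ) : 0 < w l :=
    inv_pos.2 <| add_pos_of_pos_of_nonneg one_pos <|
      mul_nonneg hlam.le <| sum_nonneg fun j _ => (even_two_mul k).pow_nonneg _
  have hsum : Summable w := summable_inv_one_add_mul_sum_pow hlam <| by
    rw [Fintype.card_fin]
    exact_mod_cast (by linarith : (m : ℝ) < 2 * k)
  have hG : (Matrix.of fun i j => gfun m k lam (p i - p j)) = Matrix.of fun i j =>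
      ∑' l, w l * cos (2 * π * ∑ t, (l t : ℝ) * p i t - 2 * π * ∑ t, (l t : ℝ) * p j t) := by
    ext i j
    refine tsum_congr fun l => ?_
    simp only [Pi.sub_apply, mul_sub, sum_sub_distrib, div_eq_inv_mul, w]
  rw [hG]
  exact posDef_of_tsum_mul_cos_sub hw hsum <| (AddChar.linearIndependent_coe _ ℂ).comp
    (fun i => torusChar (p i)) fun i j h => hp i j (exists_int_sub_eq_of_torusChar_eq h)

/-- For every `λ > 0` and points `p_1,…,p_n` that are distinct as points of the
torus `𝕋^m`, the `n × n` matrix `G_λ` with entries `(G_λ)_{ij} = g_λ(p_i − p_j)`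
is symmetric positive definite (`k > m/2`). -/
theorem stmt_7 (m k n : ℕ) (hm : 0 < m) (hk : 0 < k) (hkm : (m : ℝ) / 2 < (k : ℝ))
    (lam : ℝ) (hlam : 0 < lam) (p : Fin n → Fin m → ℝ)
    (hp : ∀ i j : Fin n, (∀ t, ∃ z : ℤ, p i t - p j t = (z : ℝ)) → i = j) :
    (Matrix.of fun i j : Fin n => gfun m k lam (p i - p j)).PosDef :=
  stmt_7_general m k n hkm lam hlam p hp
end
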